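/- arXiv:0707.1733 — 2 statements merged into one kernel-verified Lean document; each statement's English description precedes it below -/
import Mathlib

section
/- Assume R is a field. For each λ ∈ Λ^+, the restriction to S^p of the irreducible S(Λ)-module L^λ contains an S^p-submodule isomorphic to L_p^{(λ,0)}. -/
/-!
Common framework for the formalization of results of Shoji–Wada,
"Cyclotomic q-Schur algebras associated to the Ariki-Koike algebra".
-/

open scoped BigOperators TensorProduct
open MulOpposite

noncomputable section

/-! ## Multicompositions -/

/-- An `r`-multicomposition of `n`, whose `k`-th component is a composition
of length `≤ m k`. -/
structure MultiComp (n r : ℕ) (m : Fin r → ℕ) where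
  part : (k : Fin r) → Fin (m k) → ℕ
  sum_eq : (∑ k, ∑ i, part k i) = n

namespace MultiComp

variable {n r : ℕ} {m : Fin r → ℕ}

theorem part_injective : Function.Injective (part : MultiComp n r m → _) := by
  rintro ⟨a, _⟩ ⟨b, _⟩ h
  simpa using h

instance : DecidableEq (MultiComp n r m) := fun a b =>
  decidable_of_iff (a.part = b.part) part_injective.eq_iff

theorem part_le_n (lam : MultiComp n r m) (k : Fin r) (i : Fin (m k)) :
    lam.part k i ≤ n := by
  calc lam.part k i ≤ ∑ i, lam.part k i :=
        Finset.single_le_sum (fun _ _ => Nat.zero_le _) (Finset.mem_univ i)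
    _ ≤ ∑ k, ∑ i, lam.part k i :=
        Finset.single_le_sum (f := fun k => ∑ i, lam.part k i)
          (fun _ _ => Nat.zero_le _) (Finset.mem_univ k)
    _ = n := lam.sum_eq

instance : Fintype (MultiComp n r m) :=
  Fintype.ofInjective
    (fun lam (k : Fin r) (i : Fin (m k)) =>
      (⟨lam.part k i, Nat.lt_succ_of_le (part_le_n lam k i)⟩ : Fin (n + 1)))
    (fun a b h => part_injective (by
      funext k i
      exact congrArg Fin.val (congrFun (congrFun h k) i)))

/-- an `r`-multipartition: every component is weakly decreasing -/
def IsPartition (lam : MultiComp n r m) : Prop :=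
  ∀ (k : Fin r) (i j : Fin (m k)), i ≤ j → lam.part k j ≤ lam.part k i

instance (lam : MultiComp n r m) : Decidable lam.IsPartition := by
  unfold IsPartition; infer_instance

/-- the size `|λ^{(k)}|` of the `k`-th component -/
def compSize (lam : MultiComp n r m) (k : Fin r) : ℕ := ∑ i, lam.part k i

/-- the dominance order `λ ⊵ μ` on multicompositions -/
def Dominates (lam mu : MultiComp n r m) : Prop :=
  ∀ (k : Fin r) (i : Fin (m k)),
    ((∑ c ∈ Finset.univ.filter fun c => c < k, mu.compSize c) +
        ∑ j ∈ Finset.univ.filter fun j => j ≤ i, mu.part k j) ≤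
      (∑ c ∈ Finset.univ.filter fun c => c < k, lam.compSize c) +
        ∑ j ∈ Finset.univ.filter fun j => j ≤ i, lam.part k j

/-- the strict dominance order `λ ⊳ μ` -/
def SDominates (lam mu : MultiComp n r m) : Prop :=
  Dominates lam mu ∧ lam ≠ mu

end MultiComp

/-- `Λ` is a saturated set of multicompositions: it contains every multipartition
dominating one of its members. -/
def Saturated {n r : ℕ} {m : Fin r → ℕ} (Λ : Finset (MultiComp n r m)) : Prop :=
  ∀ lam : MultiComp n r m, lam.IsPartition →
    (∃ mu ∈ Λ, MultiComp.Dominates lam mu) → lam ∈ Λ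

/-! ## Tableaux -/

/-- the set of entries `(i,k)` (row `i` of component `k`) for tableaux -/
abbrev MCEntry (r : ℕ) (m : Fin r → ℕ) := Σ k : Fin r, Fin (m k)

/-- the total order on entries: `(i₁,k₁) ≤ (i₂,k₂)` iff `k₁ < k₂`, or `k₁ = k₂` and
`i₁ ≤ i₂`. -/
def entryLE {r : ℕ} {m : Fin r → ℕ} (a b : MCEntry r m) : Prop :=
  a.1 < b.1 ∨ (a.1 = b.1 ∧ (a.2 : ℕ) ≤ (b.2 : ℕ))

/-- the associated strict order on entries -/
def entryLT {r : ℕ} {m : Fin r → ℕ} (a b : MCEntry r m) : Prop :=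
  a.1 < b.1 ∨ (a.1 = b.1 ∧ (a.2 : ℕ) < (b.2 : ℕ))

/-- the cells `(k, i, j)` (component `k`, row `i`, column `j`) of the Young diagram
of a multicomposition -/
abbrev MultiComp.Cell {n r : ℕ} {m : Fin r → ℕ} (lam : MultiComp n r m) :=
  Σ (k : Fin r) (i : Fin (m k)), Fin (lam.part k i)

/-- Semistandard tableaux of shape `lam` and type `mu` in the sense of
Dipper–James–Mathas: rows weakly increase, columns strictly increase, the entries of
the `k`-th component have second coordinate `≥ k`, and for each entry `(i,k)` the
number of cells carrying it equals `mu.part k i`. -/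
structure SSTab {n r : ℕ} {m : Fin r → ℕ} (lam mu : MultiComp n r m) where
  entry : lam.Cell → MCEntry r m
  rowWeak : ∀ (k : Fin r) (i : Fin (m k)) (j j' : Fin (lam.part k i)),
    j ≤ j' → entryLE (entry ⟨k, i, j⟩) (entry ⟨k, i, j'⟩)
  colStrict : ∀ (k : Fin r) (i i' : Fin (m k)) (j : ℕ)
    (hj : j < lam.part k i) (hj' : j < lam.part k i'), i < i' →
    entryLT (entry ⟨k, i, ⟨j, hj⟩⟩) (entry ⟨k, i', ⟨j, hj'⟩⟩)
  compLE : ∀ c : lam.Cell, c.1 ≤ (entry c).1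
  typeCount : ∀ e : MCEntry r m,
    mu.part e.1 e.2 = Fintype.card {c : lam.Cell // entry c = e}

namespace SSTab

variable {n r : ℕ} {m : Fin r → ℕ} {lam mu : MultiComp n r m}

theorem entry_injective : Function.Injective (entry : SSTab lam mu → _) := by
  rintro ⟨a, _, _, _, _⟩ ⟨b, _, _, _, _⟩ h
  simpa using h

instance : Fintype (SSTab lam mu) := Fintype.ofInjective entry entry_injective

instance : DecidableEq (SSTab lam mu) := fun a b =>
  decidable_of_iff (a.entry = b.entry) entry_injective.eq_iff

end SSTab

/-- Standard tableaux of shape `lam`: bijective fillings of the diagram by the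
letters `1, …, n`, increasing along rows and down columns. -/
structure StdTab {n r : ℕ} {m : Fin r → ℕ} (lam : MultiComp n r m) where
  entry : lam.Cell → Fin n
  bij : Function.Bijective entry
  rowStrict : ∀ (k : Fin r) (i : Fin (m k)) (j j' : Fin (lam.part k i)),
    j < j' → entry ⟨k, i, j⟩ < entry ⟨k, i, j'⟩
  colStrict : ∀ (k : Fin r) (i i' : Fin (m k)) (j : ℕ)
    (hj : j < lam.part k i) (hj' : j < lam.part k i'), i < i' →
    entry ⟨k, i, ⟨j, hj⟩⟩ < entry ⟨k, i', ⟨j, hj'⟩⟩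

namespace StdTab

variable {n r : ℕ} {m : Fin r → ℕ} {lam : MultiComp n r m}

theorem entry_injective : Function.Injective (entry : StdTab lam → _) := by
  rintro ⟨a, _, _, _⟩ ⟨b, _, _, _⟩ h
  simpa using h

instance : Fintype (StdTab lam) := Fintype.ofInjective entry entry_injective

end StdTab
/-! ## The block structure attached to `p = (r₁, …, r_g)` -/

/-- componentwise comparison of vectors in `ℤ_{≥0}^g` -/
def vecLE {g : ℕ} (f h : Fin g → ℕ) : Prop := ∀ b, f b ≤ h b

instance {g : ℕ} (f h : Fin g → ℕ) : Decidable (vecLE f h) := by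
  unfold vecLE; infer_instance

/-- strict componentwise comparison: `f ≤ h` componentwise and `f ≠ h` -/
def vecLT {g : ℕ} (f h : Fin g → ℕ) : Prop := vecLE f h ∧ f ≠ h

instance {g : ℕ} (f h : Fin g → ℕ) : Decidable (vecLT f h) := by
  unfold vecLT; infer_instance

/-- The datum of `p = (r₁, …, r_g)`, encoded by the map sending a component
`k ∈ {1, …, r}` to its block: the fibers of `π` are the intervals
`{p_b + 1, …, p_b + r_b}`, of sizes `r_b > 0`. -/
structure BlockCtx (r g : ℕ) where
  π : Fin r → Fin g
  mono : Monotone π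
  surj : Function.Surjective π

namespace BlockCtx

variable {r g : ℕ} (P : BlockCtx r g) {n : ℕ} {m : Fin r → ℕ}

/-- `α_p(μ) = (n₁, …, n_g)`, `n_b = |μ^{[b]}|` -/
def alphaP (mu : MultiComp n r m) : Fin g → ℕ := fun b =>
  ∑ k ∈ Finset.univ.filter fun k => P.π k = b, mu.compSize k

/-- `a_p(μ) = (a₁, …, a_g)`, `a_b = n₁ + ⋯ + n_{b-1}` -/
def aP (mu : MultiComp n r m) : Fin g → ℕ := fun b =>
  ∑ k ∈ Finset.univ.filter fun k => P.π k < b, mu.compSize k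

/-- `r_b`, the number of components in block `b` -/
def rblk (b : Fin g) : ℕ := (Finset.univ.filter fun k => P.π k = b).card

/-- the components in block `b`, listed in increasing order -/
def blkEquiv (b : Fin g) :
    Fin (P.rblk b) ≃o {x // x ∈ Finset.univ.filter fun k => P.π k = b} :=
  (Finset.univ.filter fun k => P.π k = b).orderIsoOfFin rfl

/-- `m^{[b]}`, the row bounds of block `b` -/
def mblk (m : Fin r → ℕ) (b : Fin g) : Fin (P.rblk b) → ℕ :=
  fun i => m ((P.blkEquiv b i : {x // x ∈ Finset.univ.filter fun k => P.π k = b}) : Fin r)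

/-- the block component `μ^{[b]}` of a multicomposition, an `r_b`-multicomposition
of `n_b = α_p(μ)_b` -/
def restrictTo (mu : MultiComp n r m) (b : Fin g) (nb : ℕ)
    (h : P.alphaP mu b = nb) : MultiComp nb (P.rblk b) (P.mblk m b) where
  part := fun k i => mu.part ((P.blkEquiv b k :
    {x // x ∈ Finset.univ.filter fun k => P.π k = b}) : Fin r) i
  sum_eq := by
    subst h
    calc (∑ k : Fin (P.rblk b), ∑ i, mu.part ((P.blkEquiv b k :
            {x // x ∈ Finset.univ.filter fun k => P.π k = b}) : Fin r) i)
        = ∑ x : {x // x ∈ Finset.univ.filter fun k => P.π k = b},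
            mu.compSize (x : Fin r) :=
          Fintype.sum_equiv (P.blkEquiv b).toEquiv _ _ (fun _ => rfl)
      _ = ∑ k ∈ Finset.univ.filter fun k => P.π k = b, mu.compSize k :=
          Finset.sum_coe_sort _ _
      _ = P.alphaP mu b := rfl

theorem restrictTo_isPartition (mu : MultiComp n r m) (hmu : mu.IsPartition)
    (b : Fin g) (nb : ℕ) (h : P.alphaP mu b = nb) :
    (P.restrictTo mu b nb h).IsPartition :=
  fun k i j hij => hmu _ i j hij

/-- the largest component index in block `b` (that is, `p_b + r_b`) -/
def blockLast (b : Fin g) : Fin r :=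
  (Finset.univ.filter fun k => P.π k = b).max' (by
    obtain ⟨k, hk⟩ := P.surj b
    exact ⟨k, Finset.mem_filter.2 ⟨Finset.mem_univ _, hk⟩⟩)

end BlockCtx
/-! ## The cyclotomic q-Schur algebra with its Dipper–James–Mathas cellular basis -/

/-- the multicompositions belonging to `Λ` -/
abbrev LamS {n r : ℕ} {m : Fin r → ℕ} (Λ : Finset (MultiComp n r m)) := {x // x ∈ Λ}

/-- `Λ⁺`, the multipartitions belonging to `Λ` -/
abbrev LamP {n r : ℕ} {m : Fin r → ℕ} (Λ : Finset (MultiComp n r m)) :=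
  {x : MultiComp n r m // x ∈ Λ ∧ x.IsPartition}

/-- the index set of the Dipper–James–Mathas cellular basis
`{φ_{S,T} : S ∈ T₀(λ,μ), T ∈ T₀(λ,ν), λ ∈ Λ⁺, μ, ν ∈ Λ}` -/
abbrev DJMIndex {n r : ℕ} {m : Fin r → ℕ} (Λ : Finset (MultiComp n r m)) :=
  Σ (lam : LamP Λ) (mu : LamS Λ) (nu : LamS Λ), SSTab lam.1 mu.1 × SSTab lam.1 nu.1

/-- Abstract datum of the cyclotomic q-Schur algebra `S(Λ) = End_H(⊕_{μ∈Λ} M^μ)`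
together with its Dipper–James–Mathas cellular basis `φ_{S,T}`
(`bas ⟨λ, μ, ν, (S, T)⟩` is the basis element `φ_{S,T} ∈ Hom_H(M^ν, M^μ)` for
`S ∈ T₀(λ,μ)`, `T ∈ T₀(λ,ν)`), with its cellular anti-automorphism `*`
(`astar`), and the orthogonal idempotents `φ_μ = id_{M^μ}` (`phiId`). -/
structure SchurAlgebra (R : Type) [CommRing R] {n r : ℕ} {m : Fin r → ℕ}
    (Λ : Finset (MultiComp n r m)) where
  carrier : Type
  [ringI : Ring carrier]
  [algI : Algebra R carrier]
  bas : Module.Basis (DJMIndex Λ) R carrier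
  astar : carrier →ₗ[R] carrier
  astar_mul : ∀ x y : carrier, astar (x * y) = astar y * astar x
  astar_bas : ∀ (lam : LamP Λ) (mu nu : LamS Λ)
    (S : SSTab lam.1 mu.1) (T : SSTab lam.1 nu.1),
    astar (bas ⟨lam, mu, nu, (S, T)⟩) = bas ⟨lam, nu, mu, (T, S)⟩
  phiId : LamS Λ → carrier
  phiId_sum : ∑ mu : LamS Λ, phiId mu = 1
  phiId_mul : ∀ mu nu : LamS Λ, phiId mu * phiId nu = if mu = nu then phiId mu else 0
  phiId_mul_bas : ∀ (lam : LamP Λ) (mu nu : LamS Λ) (S : SSTab lam.1 mu.1)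
    (T : SSTab lam.1 nu.1) (rho : LamS Λ),
    phiId rho * bas ⟨lam, mu, nu, (S, T)⟩ =
      if rho = mu then bas ⟨lam, mu, nu, (S, T)⟩ else 0
  bas_mul_phiId : ∀ (lam : LamP Λ) (mu nu : LamS Λ) (S : SSTab lam.1 mu.1)
    (T : SSTab lam.1 nu.1) (rho : LamS Λ),
    bas ⟨lam, mu, nu, (S, T)⟩ * phiId rho =
      if rho = nu then bas ⟨lam, mu, nu, (S, T)⟩ else 0
  cellular : ∀ (a : carrier) (lam : LamP Λ) (mu : LamS Λ) (S : SSTab lam.1 mu.1),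
    ∃ c : (Σ mu' : LamS Λ, SSTab lam.1 mu'.1) → R,
      ∀ (nu : LamS Λ) (T : SSTab lam.1 nu.1),
        a * bas ⟨lam, mu, nu, (S, T)⟩ -
            ∑ x : Σ mu' : LamS Λ, SSTab lam.1 mu'.1,
              c x • bas ⟨lam, x.1, nu, (x.2, T)⟩ ∈
          Submodule.span R
            {y : carrier | ∃ (lam' : LamP Λ) (mu' nu' : LamS Λ)
              (S' : SSTab lam'.1 mu'.1) (T' : SSTab lam'.1 nu'.1),
              MultiComp.SDominates lam'.1 lam.1 ∧
              y = bas ⟨lam', mu', nu', (S', T')⟩}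

namespace SchurAlgebra

variable {R : Type} [CommRing R] {n r : ℕ} {m : Fin r → ℕ}
variable {Λ : Finset (MultiComp n r m)}

instance (SA : SchurAlgebra R Λ) : Ring SA.carrier := SA.ringI
instance (SA : SchurAlgebra R Λ) : Algebra R SA.carrier := SA.algI

/-- the two-sided ideal `S(Λ)^{∨λ}`, spanned by the `φ_{S,T}` of shape strictly
dominating `λ` -/
def SVee (SA : SchurAlgebra R Λ) (lam : LamP Λ) : Submodule R SA.carrier :=
  Submodule.span R
    {y : SA.carrier | ∃ (lam' : LamP Λ) (mu' nu' : LamS Λ)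
      (S' : SSTab lam'.1 mu'.1) (T' : SSTab lam'.1 nu'.1),
      MultiComp.SDominates lam'.1 lam.1 ∧ y = SA.bas ⟨lam', mu', nu', (S', T')⟩}

end SchurAlgebra

/-! ## The parabolic subalgebra `S^p` and its combinatorics -/

section PLayer

variable {R : Type} [CommRing R] {n r g : ℕ} {m : Fin r → ℕ}
variable {Λ : Finset (MultiComp n r m)}

/-- a semistandard tableau of shape `λ` together with its type `μ`,
i.e. an element of `T₀(λ) = ⋃_{μ ∈ Λ} T₀(λ,μ)` -/
abbrev TabOf (Λ : Finset (MultiComp n r m)) (lam : LamP Λ) :=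
  Σ mu : LamS Λ, SSTab lam.1 mu.1

/-- the condition defining `T₀^p(λ,μ) ⊆ T₀(λ,μ)`: `a_p(λ) = a_p(μ)` -/
def pCond (P : BlockCtx r g) (lam : LamP Λ) (x : TabOf Λ lam) : Prop :=
  P.aP x.1.1 = P.aP lam.1

instance (P : BlockCtx r g) (lam : LamP Λ) (x : TabOf Λ lam) :
    Decidable (pCond P lam x) := by
  unfold pCond; infer_instance

/-- `T₀^p(λ)`, the tableaux whose type has the same `a_p` as the shape -/
abbrev PTab (P : BlockCtx r g) (lam : LamP Λ) := {x : TabOf Λ lam // pCond P lam x}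

/-- `x` is the canonical tableau `T^λ = λ(t^λ)` of shape and type `λ` -/
def IsCanonical (lam : LamP Λ) (x : TabOf Λ lam) : Prop :=
  x.1.1 = lam.1 ∧ ∀ c : lam.1.Cell, x.2.entry c = ⟨c.1, c.2.1⟩

namespace SchurAlgebra

/-- the subset `Z^p` of the cellular basis: those `φ_{S,T}` with `S ∈ T₀(λ,μ)`,
`T ∈ T₀(λ,ν)` such that `a_p(λ) > a_p(μ)` whenever `α_p(μ) ≠ α_p(ν)` -/
def ZpSet (SA : SchurAlgebra R Λ) (P : BlockCtx r g) : Set SA.carrier :=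
  {x | ∃ (lam : LamP Λ) (mu nu : LamS Λ) (S : SSTab lam.1 mu.1) (T : SSTab lam.1 nu.1),
    (P.alphaP mu.1 ≠ P.alphaP nu.1 → vecLT (P.aP mu.1) (P.aP lam.1)) ∧
    x = SA.bas ⟨lam, mu, nu, (S, T)⟩}

/-- the subset `Z^p \ {φ_{S,T} : S, T ∈ T₀^p(λ)}` spanning the two-sided ideal
`\hat S^p` of `S^p` -/
def ZpHatSet (SA : SchurAlgebra R Λ) (P : BlockCtx r g) : Set SA.carrier :=
  {x | ∃ (lam : LamP Λ) (mu nu : LamS Λ) (S : SSTab lam.1 mu.1) (T : SSTab lam.1 nu.1),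
    (P.alphaP mu.1 ≠ P.alphaP nu.1 → vecLT (P.aP mu.1) (P.aP lam.1)) ∧
    ¬(P.aP mu.1 = P.aP lam.1 ∧ P.aP nu.1 = P.aP lam.1) ∧
    x = SA.bas ⟨lam, mu, nu, (S, T)⟩}

end SchurAlgebra

/-- the index set `Σ^p ⊆ Λ⁺ × {0,1}`, where `(λ,1)` is kept only if there exists
`μ ∈ Λ` with `a_p(λ) > a_p(μ)` and `T₀(λ,μ) ≠ ∅` -/
def SigmaPIdx (Λ : Finset (MultiComp n r m)) (P : BlockCtx r g) :=
  {e : LamP Λ × Bool // e.2 = true →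
    ∃ mu : LamS Λ, vecLT (P.aP mu.1) (P.aP e.1.1) ∧ Nonempty (SSTab e.1.1 mu.1)}

/-- the partial order on `Σ^p`: `(λ₁,ε₁) > (λ₂,ε₂)` iff `λ₁ ⊳ λ₂`, or `λ₁ = λ₂`
and `ε₁ > ε₂` -/
def sigmaGT (P : BlockCtx r g) (e f : SigmaPIdx Λ P) : Prop :=
  MultiComp.SDominates e.1.1.1 f.1.1.1 ∨
    (e.1.1 = f.1.1 ∧ e.1.2 = true ∧ f.1.2 = false)

/-- the element `(λ, 0)` of `Σ^p` -/
def eZero (P : BlockCtx r g) (lam : LamP Λ) : SigmaPIdx Λ P :=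
  ⟨(lam, false), fun h => (Bool.false_ne_true h).elim⟩

/-- the index set `I^p(ε)`: `T₀^p(λ)` for `ε = (λ,0)`, and
`⋃ {T₀(λ,μ) : a_p(λ) > a_p(μ)}` for `ε = (λ,1)` -/
def pIp (P : BlockCtx r g) (e : SigmaPIdx Λ P) : Set (TabOf Λ e.1.1) :=
  {x | (e.1.2 = true ∧ vecLT (P.aP x.1.1) (P.aP e.1.1.1)) ∨
       (e.1.2 = false ∧ pCond P e.1.1 x)}

/-- the index set `J^p(ε)`: `T₀^p(λ)` for `ε = (λ,0)`, and `T₀(λ)` for `ε = (λ,1)` -/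
def pJp (P : BlockCtx r g) (e : SigmaPIdx Λ P) : Set (TabOf Λ e.1.1) :=
  {x | e.1.2 = true ∨ pCond P e.1.1 x}

instance (P : BlockCtx r g) (e : SigmaPIdx Λ P) :
    DecidablePred (· ∈ pIp (Λ := Λ) P e) := fun x =>
  decidable_of_iff ((e.1.2 = true ∧ vecLT (P.aP x.1.1) (P.aP e.1.1.1)) ∨
    (e.1.2 = false ∧ pCond P e.1.1 x)) Iff.rfl

instance (P : BlockCtx r g) (e : SigmaPIdx Λ P) :
    DecidablePred (· ∈ pJp (Λ := Λ) P e) := fun x =>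
  decidable_of_iff (e.1.2 = true ∨ pCond P e.1.1 x) Iff.rfl

namespace SchurAlgebra

/-- the set `Z^p(ε) = {φ_{S,T} : S ∈ I^p(ε), T ∈ J^p(ε)}` -/
def ZpAt (SA : SchurAlgebra R Λ) (P : BlockCtx r g) (e : SigmaPIdx Λ P) :
    Set SA.carrier :=
  {x | ∃ S ∈ pIp P e, ∃ T ∈ pJp P e, x = SA.bas ⟨e.1.1, S.1, T.1, (S.2, T.2)⟩}

/-- the ideal `(S^p)^{∨ε}`, spanned by the `Z^p(ε')` for `ε' > ε` -/
def SpVee (SA : SchurAlgebra R Λ) (P : BlockCtx r g) (e : SigmaPIdx Λ P) :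
    Submodule R SA.carrier :=
  Submodule.span R (⋃ e' : {f : SigmaPIdx Λ P // sigmaGT P f e}, SA.ZpAt P e'.1)

end SchurAlgebra

end PLayer
/-! ## Based right modules and composition multiplicities -/

/-- a right `A`-module which is free as an `R`-module with a distinguished basis
indexed by `ι`; right `A`-modules are treated as left `Aᵐᵒᵖ`-modules -/
structure BasedRightModule (R : Type) [CommRing R] (A : Type) [Ring A]
    [Algebra R A] (ι : Type) where
  M : Type
  [abGrp : AddCommGroup M]
  [modR : Module R M]
  [modA : Module Aᵐᵒᵖ M]
  [tower : IsScalarTower R Aᵐᵒᵖ M]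
  bas : Module.Basis ι R M

namespace BasedRightModule

variable {R : Type} [CommRing R] {A : Type} [Ring A] [Algebra R A] {ι : Type}

instance (X : BasedRightModule R A ι) : AddCommGroup X.M := X.abGrp
instance (X : BasedRightModule R A ι) : Module R X.M := X.modR
instance (X : BasedRightModule R A ι) : Module Aᵐᵒᵖ X.M := X.modA
instance (X : BasedRightModule R A ι) : IsScalarTower R Aᵐᵒᵖ X.M := X.tower

end BasedRightModule

/-- `N` is the radical of the bilinear form on the based module `X` whose Gram
matrix in the distinguished basis is `f` -/
def IsFormRadical {R : Type} [CommRing R] {A : Type} [Ring A] [Algebra R A]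
    {ι : Type} [Fintype ι] (X : BasedRightModule R A ι) (f : ι → ι → R)
    (N : Submodule Aᵐᵒᵖ X.M) : Prop :=
  ∀ x : X.M, x ∈ N ↔ ∀ t : ι, (∑ s : ι, X.bas.repr x s * f s t) = 0

open Classical in
/-- the number of factors of the composition series `s` isomorphic to `L`: the
multiplicity `[M : L]` when `s` runs from `⊥` to `⊤` -/
noncomputable def factorMult {A : Type} [Ring A] {M : Type} [AddCommGroup M]
    [Module A M] (s : CompositionSeries (Submodule A M)) (L : Type)
    [AddCommGroup L] [Module A L] : ℕ :=
  (Finset.univ.filter fun i : Fin s.length =>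
    Nonempty ((↥(s i.succ) ⧸ Submodule.comap (s i.succ).subtype (s i.castSucc))
      ≃ₗ[A] L)).card

/-- a composition series of the full module: from `⊥` to `⊤` -/
def IsFullSeries {A : Type} [Ring A] {M : Type} [AddCommGroup M] [Module A M]
    (s : CompositionSeries (Submodule A M)) : Prop :=
  s.head = ⊥ ∧ s.last = ⊤
/-! ## The quotient algebra `\bar S^p` -/

section BarLayer

variable {R : Type} [CommRing R] {n r g : ℕ} {m : Fin r → ℕ}
variable {Λ : Finset (MultiComp n r m)}

/-- Abstract datum of the quotient algebra `\bar S^p = S^p / \hat S^p`: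
an `R`-algebra `B` together with the surjective projection `proj : S^p → B`,
whose kernel is the span of `Z^p \ {φ_{S,T} : S, T ∈ T₀^p(λ)}`, and the images
`\barφ_{S,T}` (`barphi`) of the basis elements, which form an `R`-basis of `B`. -/
structure BarSchurAlgebra {R : Type} [CommRing R] {n r : ℕ} {m : Fin r → ℕ}
    {Λ : Finset (MultiComp n r m)} {g : ℕ} (SA : SchurAlgebra R Λ)
    (P : BlockCtx r g) (Sp : Subalgebra R SA.carrier) where
  B : Type
  [ringB : Ring B]
  [algB : Algebra R B]
  proj : ↥Sp →ₐ[R] B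
  surj : Function.Surjective proj
  barphi : (lam : LamP Λ) → PTab P lam → PTab P lam → B
  bbas : Module.Basis (Σ lam : LamP Λ, PTab P lam × PTab P lam) R B
  bbas_eq : ∀ (lam : LamP Λ) (S T : PTab P lam), bbas ⟨lam, (S, T)⟩ = barphi lam S T
  proj_bas : ∀ (lam : LamP Λ) (mu nu : LamS Λ) (S : SSTab lam.1 mu.1)
    (T : SSTab lam.1 nu.1) (x : ↥Sp),
    (x : SA.carrier) = SA.bas ⟨lam, mu, nu, (S, T)⟩ →
    proj x = if h : pCond P lam ⟨mu, S⟩ ∧ pCond P lam ⟨nu, T⟩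
      then barphi lam ⟨⟨mu, S⟩, h.1⟩ ⟨⟨nu, T⟩, h.2⟩ else 0
  ker_char : ∀ x : ↥Sp, proj x = 0 ↔ (x : SA.carrier) ∈
    Submodule.span R (SA.ZpHatSet P)

namespace BarSchurAlgebra

variable {SA : SchurAlgebra R Λ} {P : BlockCtx r g} {Sp : Subalgebra R SA.carrier}

instance (BA : BarSchurAlgebra SA P Sp) : Ring BA.B := BA.ringB
instance (BA : BarSchurAlgebra SA P Sp) : Algebra R BA.B := BA.algB

/-- the two-sided ideal `(\bar S^p)^{∨λ}`, spanned by the `\barφ_{S,T}` of shape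
strictly dominating `λ` -/
def BarVee (BA : BarSchurAlgebra SA P Sp) (lam : LamP Λ) : Submodule R BA.B :=
  Submodule.span R {y : BA.B | ∃ (lam' : LamP Λ) (S T : PTab P lam'),
    MultiComp.SDominates lam'.1 lam.1 ∧ y = BA.barphi lam' S T}

end BarSchurAlgebra

/-! ## Characterizations of the various Weyl modules -/

namespace SchurAlgebra

/-- `W` is the Weyl module `W^λ` of `S(Λ)`: its basis `{φ_T}` is indexed by
`T₀(λ)` and the right action is the one inherited from multiplication in
`S(Λ)` modulo `S(Λ)^{∨λ}`. -/
def IsWeylModule (SA : SchurAlgebra R Λ) (lam : LamP Λ)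
    (W : BasedRightModule R SA.carrier (TabOf Λ lam)) : Prop :=
  ∀ (S T : TabOf Λ lam) (a : SA.carrier),
    SA.bas ⟨lam, S.1, T.1, (S.2, T.2)⟩ * a -
        ∑ T' : TabOf Λ lam, (W.bas.repr (MulOpposite.op a • W.bas T) T') •
          SA.bas ⟨lam, S.1, T'.1, (S.2, T'.2)⟩ ∈ SA.SVee lam

/-- `f` is the canonical bilinear form of the Weyl module `W^λ`, determined by
`φ_{T^λ,S} φ_{T,T^λ} ≡ ⟨φ_S, φ_T⟩ φ_{T^λ,T^λ} mod S(Λ)^{∨λ}`; here `tc` is the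
canonical tableau `T^λ`. -/
def IsWeylForm (SA : SchurAlgebra R Λ) (lam : LamP Λ) (tc : TabOf Λ lam)
    (f : TabOf Λ lam → TabOf Λ lam → R) : Prop :=
  ∀ S T : TabOf Λ lam,
    SA.bas ⟨lam, tc.1, S.1, (tc.2, S.2)⟩ * SA.bas ⟨lam, T.1, tc.1, (T.2, tc.2)⟩ -
      f S T • SA.bas ⟨lam, tc.1, tc.1, (tc.2, tc.2)⟩ ∈ SA.SVee lam

/-- `Z` is the standard right `S^p`-module `Z_p^ε` attached to `ε ∈ Σ^p`: its
basis `{φ_T^ε}` is indexed by `J^p(ε)` and the right `S^p`-action is inherited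
from multiplication in `S^p` modulo `(S^p)^{∨ε}`. -/
def IsZpModule (SA : SchurAlgebra R Λ) (P : BlockCtx r g)
    (Sp : Subalgebra R SA.carrier) (e : SigmaPIdx Λ P)
    (Z : BasedRightModule R ↥Sp {x : TabOf Λ e.1.1 // x ∈ pJp P e}) : Prop :=
  ∀ (S : {x : TabOf Λ e.1.1 // x ∈ pIp P e})
    (T : {x : TabOf Λ e.1.1 // x ∈ pJp P e}) (a : ↥Sp),
    SA.bas ⟨e.1.1, S.1.1, T.1.1, (S.1.2, T.1.2)⟩ * (a : SA.carrier) -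
        ∑ T' : {x : TabOf Λ e.1.1 // x ∈ pJp P e},
          (Z.bas.repr (MulOpposite.op a • Z.bas T) T') •
            SA.bas ⟨e.1.1, S.1.1, T'.1.1, (S.1.2, T'.1.2)⟩ ∈ SA.SpVee P e

/-- `f` is the canonical bilinear pairing `β_ε` between `◇Z_p^ε` and `Z_p^ε`,
determined by `φ_{U,T} φ_{S,V} ≡ β_ε(φ_S^ε, φ_T^ε) φ_{U,V} mod (S^p)^{∨ε}`. -/
def IsBetaForm (SA : SchurAlgebra R Λ) (P : BlockCtx r g) (e : SigmaPIdx Λ P)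
    (f : {x : TabOf Λ e.1.1 // x ∈ pIp P e} →
      {x : TabOf Λ e.1.1 // x ∈ pJp P e} → R) : Prop :=
  ∀ (U : {x : TabOf Λ e.1.1 // x ∈ pIp P e})
    (T : {x : TabOf Λ e.1.1 // x ∈ pJp P e})
    (S : {x : TabOf Λ e.1.1 // x ∈ pIp P e})
    (V : {x : TabOf Λ e.1.1 // x ∈ pJp P e}),
    SA.bas ⟨e.1.1, U.1.1, T.1.1, (U.1.2, T.1.2)⟩ *
        SA.bas ⟨e.1.1, S.1.1, V.1.1, (S.1.2, V.1.2)⟩ -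
      f S T • SA.bas ⟨e.1.1, U.1.1, V.1.1, (U.1.2, V.1.2)⟩ ∈ SA.SpVee P e

/-- `N` is the radical `rad Z_p^ε` of the pairing `β_ε` (with Gram matrix `f`). -/
def IsBetaRadical (SA : SchurAlgebra R Λ) (P : BlockCtx r g)
    (Sp : Subalgebra R SA.carrier) (e : SigmaPIdx Λ P)
    (Z : BasedRightModule R ↥Sp {x : TabOf Λ e.1.1 // x ∈ pJp P e})
    (f : {x : TabOf Λ e.1.1 // x ∈ pIp P e} →
      {x : TabOf Λ e.1.1 // x ∈ pJp P e} → R)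
    (N : Submodule (↥Sp)ᵐᵒᵖ Z.M) : Prop :=
  ∀ y : Z.M, y ∈ N ↔ ∀ S : {x : TabOf Λ e.1.1 // x ∈ pIp P e},
    (∑ T : {x : TabOf Λ e.1.1 // x ∈ pJp P e}, Z.bas.repr y T * f S T) = 0

end SchurAlgebra

namespace BarSchurAlgebra

variable {SA : SchurAlgebra R Λ} {P : BlockCtx r g} {Sp : Subalgebra R SA.carrier}

/-- `Z` is the Weyl (cell) module `\bar Z_p^λ` of the cellular algebra `\bar S^p`:
its basis `{\barφ_T}` is indexed by `T₀^p(λ)` and the right action is inherited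
from multiplication in `\bar S^p` modulo `(\bar S^p)^{∨λ}`. -/
def IsBarWeyl (BA : BarSchurAlgebra SA P Sp) (lam : LamP Λ)
    (Z : BasedRightModule R BA.B (PTab P lam)) : Prop :=
  ∀ (S T : PTab P lam) (b : BA.B),
    BA.barphi lam S T * b - ∑ T' : PTab P lam,
        (Z.bas.repr (MulOpposite.op b • Z.bas T) T') • BA.barphi lam S T' ∈
      BA.BarVee lam

/-- `f` is the canonical symmetric bilinear form `⟨·,·⟩_p` on `\bar Z_p^λ`,
determined by `\barφ_{T^λ,S} \barφ_{T,T^λ} ≡ ⟨\barφ_S, \barφ_T⟩_p \barφ_{T^λ,T^λ}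
mod (\bar S^p)^{∨λ}`; `tc` is the canonical tableau `T^λ`. -/
def IsBarForm (BA : BarSchurAlgebra SA P Sp) (lam : LamP Λ) (tc : PTab P lam)
    (f : PTab P lam → PTab P lam → R) : Prop :=
  ∀ S T : PTab P lam,
    BA.barphi lam tc S * BA.barphi lam T tc - f S T • BA.barphi lam tc tc ∈
      BA.BarVee lam

end BarSchurAlgebra

end BarLayer
/-! ## The Ariki–Koike algebra -/

/-- the defining relations of the Ariki–Koike algebra `H_{n,r}` on the generators
`T_0, T_1, …, T_{n-1}` (generator `i : Fin n` is `T_i`) -/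
inductive ArikiKoikeRel (R : Type) [CommRing R] (n r : ℕ) (q : Rˣ) (Q : Fin r → R) :
    FreeAlgebra R (Fin n) → FreeAlgebra R (Fin n) → Prop
  | cyclotomic (h : 0 < n) :
      ArikiKoikeRel R n r q Q
        (((List.finRange r).map fun j =>
          FreeAlgebra.ι R (⟨0, h⟩ : Fin n) - algebraMap R _ (Q j)).prod) 0
  | quadratic (i : Fin n) (hi : i.1 ≠ 0) :
      ArikiKoikeRel R n r q Q
        ((FreeAlgebra.ι R i - algebraMap R _ (q : R)) *
          (FreeAlgebra.ι R i + algebraMap R _ ((q⁻¹ : Rˣ) : R))) 0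
  | braid0 (h : 1 < n) :
      ArikiKoikeRel R n r q Q
        (FreeAlgebra.ι R (⟨0, Nat.lt_of_lt_of_le Nat.zero_lt_one h.le⟩ : Fin n) *
          FreeAlgebra.ι R (⟨1, h⟩ : Fin n) *
          FreeAlgebra.ι R (⟨0, Nat.lt_of_lt_of_le Nat.zero_lt_one h.le⟩ : Fin n) *
          FreeAlgebra.ι R (⟨1, h⟩ : Fin n))
        (FreeAlgebra.ι R (⟨1, h⟩ : Fin n) *
          FreeAlgebra.ι R (⟨0, Nat.lt_of_lt_of_le Nat.zero_lt_one h.le⟩ : Fin n) *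
          FreeAlgebra.ι R (⟨1, h⟩ : Fin n) *
          FreeAlgebra.ι R (⟨0, Nat.lt_of_lt_of_le Nat.zero_lt_one h.le⟩ : Fin n))
  | braid (i j : Fin n) (hi : i.1 ≠ 0) (hij : j.1 = i.1 + 1) :
      ArikiKoikeRel R n r q Q
        (FreeAlgebra.ι R i * FreeAlgebra.ι R j * FreeAlgebra.ι R i)
        (FreeAlgebra.ι R j * FreeAlgebra.ι R i * FreeAlgebra.ι R j)
  | comm (i j : Fin n) (hij : i.1 + 1 < j.1) :
      ArikiKoikeRel R n r q Q
        (FreeAlgebra.ι R i * FreeAlgebra.ι R j)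
        (FreeAlgebra.ι R j * FreeAlgebra.ι R i)

/-- the Ariki–Koike algebra `H_{n,r}` over `R` with parameters
`q, Q_1, …, Q_r` (with `q` invertible) -/
abbrev ArikiKoike (R : Type) [CommRing R] (n r : ℕ) (q : Rˣ) (Q : Fin r → R) :=
  RingQuot (ArikiKoikeRel R n r q Q)

/-! ## Corners `e·B·e` at an idempotent -/

/-- an idempotent element of a ring -/
structure IdemElem (B : Type) [Ring B] where
  e : B
  idem : e * e = e

/-- the corner `{x : B | e x e = x}` of `B` at the idempotent `e`;
for `e = \barφ_Ω` this is the modified Ariki–Koike algebra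
`\bar H^p = \barφ_Ω ⬝ \bar S^p ⬝ \barφ_Ω` of type `p` -/
def Corner {B : Type} [Ring B] (E : IdemElem B) := {x : B // E.e * x * E.e = x}

namespace Corner

variable {B : Type} [Ring B] {E : IdemElem B}

instance : Add (Corner E) :=
  ⟨fun x y => ⟨x.1 + y.1, by rw [mul_add, add_mul, x.2, y.2]⟩⟩

instance : Mul (Corner E) :=
  ⟨fun x y => ⟨x.1 * y.1, by
    have hx : E.e * x.1 = x.1 := by
      nth_rewrite 1 [← x.2]
      rw [← mul_assoc, ← mul_assoc, E.idem, x.2]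
    have hy : y.1 * E.e = y.1 := by
      nth_rewrite 1 [← y.2]
      rw [mul_assoc, E.idem, y.2]
    rw [← mul_assoc, hx, mul_assoc, hy]⟩⟩

instance : Zero (Corner E) := ⟨⟨0, by simp⟩⟩

instance : Neg (Corner E) := ⟨fun x => ⟨-x.1, by rw [mul_neg, neg_mul, x.2]⟩⟩

/-- the identity element `e` of the corner -/
def one (E : IdemElem B) : Corner E :=
  ⟨E.e, by rw [E.idem, E.idem]⟩

instance {R : Type} [CommRing R] [Algebra R B] : SMul R (Corner E) :=
  ⟨fun c x => ⟨c • x.1, by rw [mul_smul_comm, smul_mul_assoc, x.2]⟩⟩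

@[simp] theorem add_val (x y : Corner E) : (x + y).1 = x.1 + y.1 := rfl
@[simp] theorem mul_val (x y : Corner E) : (x * y).1 = x.1 * y.1 := rfl
@[simp] theorem smul_val {R : Type} [CommRing R] [Algebra R B] (c : R)
    (x : Corner E) : (c • x).1 = c • x.1 := rfl

end Corner

/-! ## The set `Ω` and the blocks of compositions of `n` -/

section OmegaLayer

variable {n r g : ℕ} {m : Fin r → ℕ}

/-- `ω ∈ Ω`: all the entries of `ω` are `0` or `1`, for each letter
`1 ≤ i ≤ n` the `i`-th rows of the components of `ω` have total size `1`,
and all nonzero rows occur in components which are last in their `p`-block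
(this uses `m_k ≥ n` for all `k`). -/
def IsOmega (P : BlockCtx r g) (hm : ∀ k, n ≤ m k) (om : MultiComp n r m) : Prop :=
  (∀ (k : Fin r) (i : Fin (m k)), om.part k i ≤ 1) ∧
  (∀ i : Fin n,
    (∑ k : Fin r, om.part k ⟨i.1, Nat.lt_of_lt_of_le i.2 (hm k)⟩) = 1) ∧
  (∀ (k : Fin r) (i : Fin (m k)), om.part k i = 1 →
    ∀ k' : Fin r, P.π k' = P.π k → k' ≤ k)

instance (P : BlockCtx r g) (hm : ∀ k, n ≤ m k) (om : MultiComp n r m) :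
    Decidable (IsOmega P hm om) := by
  unfold IsOmega; infer_instance

/-- the set `D_{n,g}` of tuples `(n₁, …, n_g)` of non-negative integers summing
to `n` -/
def DComp (n g : ℕ) := {f : Fin g → ℕ // ∑ b, f b = n}

end OmegaLayer


/-!
Send `φ_T^{(λ,0)}` to `φ_T` for `T ∈ T₀^p(λ)`. Both modules are realised inside `S(Λ)` by
`φ_T ↦ φ_{T^λ,T}`, and their defining congruences hold modulo `(S^p)^{∨(λ,0)}` and `S(Λ)^{∨λ}`.
Both ideals are spanned by basis vectors `φ_{S,T}` of shape `≠ λ` or with `S ∉ T₀^p(λ)`, so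
comparing coefficients of the `φ_{T^λ,T}` shows that the map is `S^p`-linear and that
`β_{(λ,0)}(φ_S, φ_T) = ⟨φ_T, φ_S⟩`. As moreover `⟨φ_T, φ_t⟩ = 0` when the types of `T` and `t`
differ, an element lies in `rad β_{(λ,0)}` iff its image lies in `rad W^λ`, so the map descends
to an injective map `L_p^{(λ,0)} → L^λ`.
-/

namespace Module.Basis

variable {R M N ι κ : Type*} [CommRing R] [AddCommGroup M] [Module R M] [AddCommGroup N]
  [Module R N] (b : Basis ι R M)

theorem repr_eq_zero_of_mem_span_image {K : Set ι} {x : M}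
    (hx : x ∈ Submodule.span R (b '' K)) {i : ι} (hi : i ∉ K) : b.repr x i = 0 :=
  Finsupp.notMem_support_iff.1 fun h => hi (b.mem_span_image.1 hx h)

theorem eq_zero_of_smul_mem_span_image {K : Set ι} {c : R} {i : ι}
    (h : c • b i ∈ Submodule.span R (b '' K)) (hi : i ∉ K) : c = 0 := by
  simpa using b.repr_eq_zero_of_mem_span_image h hi

theorem repr_constr_comp_apply (e : Basis κ R N) {j : κ → ι} (hj : j.Injective) (x : N)
    (k : κ) : b.repr (e.constr R (b ∘ j) x) (j k) = e.repr x k := by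
  classical
  have : (Finsupp.lapply (j k) ∘ₗ b.repr.toLinearMap) ∘ₗ e.constr R (b ∘ j) =
      Finsupp.lapply k ∘ₗ e.repr.toLinearMap :=
    e.ext fun k' => by simp [Finsupp.single_apply, hj.eq_iff]
  exact LinearMap.congr_fun this x

theorem eq_of_constr_sub_mem_span_image (e : Basis κ R N) {j : κ → ι} (hj : j.Injective)
    {K : Set ι} (hK : ∀ k, j k ∉ K) {x y : N}
    (h : e.constr R (b ∘ j) x - e.constr R (b ∘ j) y ∈ Submodule.span R (b '' K)) :
    x = y := by
  refine e.repr.injective (Finsupp.ext fun k => ?_)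
  rw [← b.repr_constr_comp_apply e hj, ← b.repr_constr_comp_apply e hj, ← sub_eq_zero,
    ← Finsupp.sub_apply, ← map_sub]
  exact b.repr_eq_zero_of_mem_span_image h (hK k)

theorem sum_repr_constr_comp_mul [Fintype ι] [Fintype κ] (e : Basis κ R N) (j : κ → ι)
    (f : ι → R) (x : N) :
    ∑ i, b.repr (e.constr R (b ∘ j) x) i * f i = ∑ k, e.repr x k * f (j k) := by
  classical
  simp only [constr_apply_fintype, Function.comp_apply, map_sum, map_smul, repr_self,
    Finsupp.coe_finsetSum, Finset.sum_apply, Finsupp.smul_apply, smul_eq_mul,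
    Finsupp.single_apply, mul_ite, mul_one, mul_zero, ite_mul, zero_mul, Finset.sum_mul]
  rw [Finset.sum_comm]
  simp [equivFun_apply]

end Module.Basis

theorem exists_injective_quotient_map {R A B Z W : Type*} [CommRing R] [Ring A] [Ring B]
    [Algebra R A] [Algebra R B] [AddCommGroup Z] [Module R Z] [Module Aᵐᵒᵖ Z]
    [IsScalarTower R Aᵐᵒᵖ Z] [AddCommGroup W] [Module R W] [Module Bᵐᵒᵖ W]
    [IsScalarTower R Bᵐᵒᵖ W] (φ : A → B) (N : Submodule Aᵐᵒᵖ Z) (N' : Submodule Bᵐᵒᵖ W)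
    (L : Z →ₗ[R] W) (hL : ∀ a z, L (op a • z) = op (φ a) • L z)
    (hN : ∀ z, L z ∈ N' ↔ z ∈ N) :
    ∃ F : (Z ⧸ N) →ₗ[R] (W ⧸ N'), Function.Injective F ∧
      ∀ a x, F (op a • x) = op (φ a) • F x := by
  let F : (Z ⧸ N) →ₗ[R] (W ⧸ N') :=
    (Submodule.Quotient.restrictScalarsEquiv R N').toLinearMap ∘ₗ
      (N.restrictScalars R).liftQ ((N'.restrictScalars R).mkQ ∘ₗ L)
        (fun z hz => by simpa using (hN z).2 hz) ∘ₗ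
      (Submodule.Quotient.restrictScalarsEquiv R N).symm.toLinearMap
  have hF : ∀ z, F (Submodule.Quotient.mk z) = Submodule.Quotient.mk (L z) := fun z => rfl
  refine ⟨F, (injective_iff_map_eq_zero F).2 fun x hx => ?_, fun a x => ?_⟩
  · obtain ⟨z, rfl⟩ := Submodule.Quotient.mk_surjective N x
    rw [hF, Submodule.Quotient.mk_eq_zero] at hx
    exact (Submodule.Quotient.mk_eq_zero N).2 ((hN z).1 hx)
  · obtain ⟨z, rfl⟩ := Submodule.Quotient.mk_surjective N x
    rw [← Submodule.Quotient.mk_smul, hF, hF, hL, Submodule.Quotient.mk_smul]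

namespace SchurAlgebra

variable {R : Type} [CommRing R] {n r g : ℕ} {m : Fin r → ℕ} {Λ : Finset (MultiComp n r m)}
  (SA : SchurAlgebra R Λ) (P : BlockCtx r g) (lam : LamP Λ)

theorem bas_mul_bas_eq_zero {lam' : LamP Λ} {mu nu mu' nu' : LamS Λ} (S : SSTab lam.1 mu.1)
    (T : SSTab lam.1 nu.1) (S' : SSTab lam'.1 mu'.1) (T' : SSTab lam'.1 nu'.1) (h : nu ≠ mu') :
    SA.bas ⟨lam, mu, nu, (S, T)⟩ * SA.bas ⟨lam', mu', nu', (S', T')⟩ = 0 := by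
  have hT : SA.bas ⟨lam, mu, nu, (S, T)⟩ * SA.phiId nu = SA.bas ⟨lam, mu, nu, (S, T)⟩ := by
    rw [SA.bas_mul_phiId, if_pos rfl]
  rw [← hT, mul_assoc, SA.phiId_mul_bas, if_neg h, mul_zero]

-- Instance search does not unfold `(eZero P lam).1.1` to `lam`, so the instances for a general
-- `e` are restated at `eZero P lam`.
instance decidablePred_mem_pIp_eZero :
    DecidablePred fun x : TabOf Λ lam => x ∈ pIp P (eZero P lam) :=
  inferInstanceAs (DecidablePred (· ∈ pIp (Λ := Λ) P (eZero P lam)))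

instance decidablePred_mem_pJp_eZero :
    DecidablePred fun x : TabOf Λ lam => x ∈ pJp P (eZero P lam) :=
  inferInstanceAs (DecidablePred (· ∈ pJp (Λ := Λ) P (eZero P lam)))

theorem mem_pIp_eZero_iff (x : TabOf Λ lam) : x ∈ pIp P (eZero P lam) ↔ pCond P lam x := by
  show (_ ∨ _) ↔ _
  simp [eZero]

theorem mem_pJp_eZero_iff (x : TabOf Λ lam) : x ∈ pJp P (eZero P lam) ↔ pCond P lam x := by
  show (_ ∨ _) ↔ _
  simp [eZero]

/-- the `φ_{S,T}` of shape `≠ λ` or with `S ∉ T₀^p(λ)` -/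
def offPCell : Set (DJMIndex Λ) := {i | i.1 ≠ lam ∨ P.aP i.2.1.1 ≠ P.aP lam.1}

theorem SVee_le_span_offPCell :
    SA.SVee lam ≤ Submodule.span R (SA.bas '' offPCell P lam) := by
  refine Submodule.span_le.2 ?_
  rintro _ ⟨lam', mu', nu', S', T', hdom, rfl⟩
  exact Submodule.subset_span ⟨_, Or.inl fun h => hdom.2 (congrArg Subtype.val h), rfl⟩

theorem SpVee_eZero_le_span_offPCell :
    SA.SpVee P (eZero P lam) ≤ Submodule.span R (SA.bas '' offPCell P lam) := by
  refine Submodule.span_le.2 ?_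
  rintro _ ⟨_, ⟨⟨e, he⟩, rfl⟩, hy⟩
  obtain ⟨S, hS, T, -, rfl⟩ := hy
  refine Submodule.subset_span ⟨_, ?_, rfl⟩
  obtain hdom | ⟨hlam, hε, -⟩ := id he
  · exact Or.inl fun h => hdom.2 (congrArg Subtype.val h)
  · rcases hS with ⟨-, hlt⟩ | ⟨hε', -⟩
    · exact Or.inr fun h => hlt.2 (h.trans (by rw [hlam]; rfl))
    · simp [hε] at hε'

variable {SA P lam} {Sp : Subalgebra R SA.carrier} {tc : TabOf Λ lam}

theorem mem_pIp_eZero_of_type_eq (htc : tc.1.1 = lam.1) : tc ∈ pIp P (eZero P lam) :=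
  (mem_pIp_eZero_iff P lam tc).2 (by simp [pCond, htc])

theorem mem_pJp_eZero_of_type_eq (htc : tc.1.1 = lam.1) : tc ∈ pJp P (eZero P lam) :=
  (mem_pJp_eZero_iff P lam tc).2 (by simp [pCond, htc])

def tabPairIdx (S T : TabOf Λ lam) : DJMIndex Λ := ⟨lam, S.1, T.1, (S.2, T.2)⟩

theorem tabPairIdx_injective (S : TabOf Λ lam) : (tabPairIdx S).Injective := by
  rintro ⟨mu, T⟩ ⟨mu', T'⟩ h
  simp only [tabPairIdx, Sigma.mk.inj_iff, heq_eq_eq, true_and] at h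
  obtain ⟨rfl, h⟩ := h
  simp_all

theorem tabPairIdx_notMem_offPCell (htc : tc.1.1 = lam.1) (T : TabOf Λ lam) :
    tabPairIdx tc T ∉ offPCell P lam := by
  rintro (h | h)
  · exact h rfl
  · exact h (by rw [← htc]; rfl)

variable (SA tc) in
def weylLift (W : BasedRightModule R SA.carrier (TabOf Λ lam)) : W.M →ₗ[R] SA.carrier :=
  W.bas.constr R (SA.bas ∘ tabPairIdx tc)

def zpToWeyl (Z0 : BasedRightModule R ↥Sp {x : TabOf Λ lam // x ∈ pJp P (eZero P lam)})
    (W : BasedRightModule R SA.carrier (TabOf Λ lam)) : Z0.M →ₗ[R] W.M :=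
  Z0.bas.constr R (W.bas ∘ Subtype.val)

variable {Z0 : BasedRightModule R ↥Sp {x : TabOf Λ lam // x ∈ pJp P (eZero P lam)}}
  {f0 : {x : TabOf Λ lam // x ∈ pIp P (eZero P lam)} →
    {x : TabOf Λ lam // x ∈ pJp P (eZero P lam)} → R}
  {N0 : Submodule (↥Sp)ᵐᵒᵖ Z0.M} {W : BasedRightModule R SA.carrier (TabOf Λ lam)}
  {fW : TabOf Λ lam → TabOf Λ lam → R} {NW : Submodule SA.carrierᵐᵒᵖ W.M}

theorem bas_mul_sub_weylLift_mem_SVee (hW : SA.IsWeylModule lam W) (T : TabOf Λ lam)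
    (a : SA.carrier) :
    SA.bas (tabPairIdx tc T) * a - SA.weylLift tc W (op a • W.bas T) ∈ SA.SVee lam := by
  rw [weylLift, Module.Basis.constr_apply_fintype]
  exact hW tc T a

theorem weylLift_comp_zpToWeyl :
    SA.weylLift tc W ∘ₗ zpToWeyl Z0 W =
      Z0.bas.constr R (SA.bas ∘ tabPairIdx tc ∘ Subtype.val) :=
  Z0.bas.ext fun T => by simp [zpToWeyl, weylLift]

theorem bas_mul_sub_weylLift_zpToWeyl_mem_SpVee (hZ0 : SA.IsZpModule P Sp (eZero P lam) Z0)
    (htc : tc.1.1 = lam.1) (T : {x : TabOf Λ lam // x ∈ pJp P (eZero P lam)}) (a : ↥Sp) :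
    SA.bas (tabPairIdx tc T.1) * (a : SA.carrier) -
      SA.weylLift tc W (zpToWeyl Z0 W (op a • Z0.bas T)) ∈ SA.SpVee P (eZero P lam) := by
  rw [← LinearMap.comp_apply, weylLift_comp_zpToWeyl, Module.Basis.constr_apply_fintype]
  exact hZ0 ⟨tc, mem_pIp_eZero_of_type_eq htc⟩ T a

theorem zpToWeyl_smul (hW : SA.IsWeylModule lam W) (hZ0 : SA.IsZpModule P Sp (eZero P lam) Z0)
    (htc : tc.1.1 = lam.1) (a : ↥Sp) (z : Z0.M) :
    zpToWeyl Z0 W (op a • z) = op (a : SA.carrier) • zpToWeyl Z0 W z := by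
  suffices zpToWeyl Z0 W ∘ₗ DistribSMul.toLinearMap R Z0.M (op a) =
      DistribSMul.toLinearMap R W.M (op (a : SA.carrier)) ∘ₗ zpToWeyl Z0 W from
    LinearMap.congr_fun this z
  refine Z0.bas.ext fun T => ?_
  have hU := Submodule.sub_mem _
    (SpVee_eZero_le_span_offPCell SA P lam
      (bas_mul_sub_weylLift_zpToWeyl_mem_SpVee (W := W) hZ0 htc T a))
    (SVee_le_span_offPCell SA P lam (bas_mul_sub_weylLift_mem_SVee (tc := tc) hW T.1 a))
  rw [sub_sub_sub_cancel_left] at hU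
  simpa [zpToWeyl] using (SA.bas.eq_of_constr_sub_mem_span_image W.bas
    (tabPairIdx_injective tc) (tabPairIdx_notMem_offPCell htc) hU).symm

theorem betaForm_eq_weylForm (hf0 : SA.IsBetaForm P (eZero P lam) f0)
    (hfW : SA.IsWeylForm lam tc fW) (htc : tc.1.1 = lam.1)
    (S : {x : TabOf Λ lam // x ∈ pIp P (eZero P lam)})
    (T : {x : TabOf Λ lam // x ∈ pJp P (eZero P lam)}) :
    f0 S T = fW T.1 S.1 := by
  have hW : SA.bas (tabPairIdx tc T.1) * SA.bas (tabPairIdx S.1 tc) -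
      fW T.1 S.1 • SA.bas (tabPairIdx tc tc) ∈ SA.SVee lam := hfW T.1 S.1
  have hZ : SA.bas (tabPairIdx tc T.1) * SA.bas (tabPairIdx S.1 tc) -
      f0 S T • SA.bas (tabPairIdx tc tc) ∈ SA.SpVee P (eZero P lam) :=
    hf0 ⟨tc, mem_pIp_eZero_of_type_eq htc⟩ T S ⟨tc, mem_pJp_eZero_of_type_eq htc⟩
  have hU := Submodule.sub_mem _ (SVee_le_span_offPCell SA P lam hW)
    (SpVee_eZero_le_span_offPCell SA P lam hZ)
  rw [sub_sub_sub_cancel_left, ← sub_smul] at hU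
  exact sub_eq_zero.1 (SA.bas.eq_zero_of_smul_mem_span_image hU
    (tabPairIdx_notMem_offPCell htc tc))

theorem weylForm_eq_zero_of_notMem (hfW : SA.IsWeylForm lam tc fW) (htc : tc.1.1 = lam.1)
    (T : {x : TabOf Λ lam // x ∈ pJp P (eZero P lam)}) {t : TabOf Λ lam}
    (ht : t ∉ pJp P (eZero P lam)) : fW T.1 t = 0 := by
  have hne : T.1.1 ≠ t.1 := fun h => ht ((mem_pJp_eZero_iff P lam t).2 <|
    (congrArg (fun mu : LamS Λ => P.aP mu.1) h).symm.trans ((mem_pJp_eZero_iff P lam T.1).1 T.2))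
  have h := hfW T.1 t
  rw [bas_mul_bas_eq_zero _ _ _ _ _ _ hne, zero_sub, neg_mem_iff] at h
  exact SA.bas.eq_zero_of_smul_mem_span_image (i := tabPairIdx tc tc)
    (SVee_le_span_offPCell SA P lam h) (tabPairIdx_notMem_offPCell htc tc)

theorem zpToWeyl_mem_iff (hf0 : SA.IsBetaForm P (eZero P lam) f0)
    (hN0 : SA.IsBetaRadical P Sp (eZero P lam) Z0 f0 N0) (hfW : SA.IsWeylForm lam tc fW)
    (hNW : IsFormRadical W fW NW) (htc : tc.1.1 = lam.1) (z : Z0.M) :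
    zpToWeyl Z0 W z ∈ NW ↔ z ∈ N0 := by
  have hpair : ∀ t, ∑ s, W.bas.repr (zpToWeyl Z0 W z) s * fW s t =
      ∑ T, Z0.bas.repr z T * fW T.1 t :=
    fun t => W.bas.sum_repr_constr_comp_mul Z0.bas Subtype.val (fW · t) z
  have hβ : ∀ S, ∑ T, Z0.bas.repr z T * f0 S T = ∑ T, Z0.bas.repr z T * fW T.1 S.1 :=
    fun S => Finset.sum_congr rfl fun T _ => by rw [betaForm_eq_weylForm hf0 hfW htc]
  rw [hNW, hN0]
  simp only [hpair]
  refine ⟨fun h S => (hβ S).trans (h S.1), fun h t => ?_⟩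
  by_cases ht : t ∈ pJp P (eZero P lam)
  · let S : {x : TabOf Λ lam // x ∈ pIp P (eZero P lam)} :=
      ⟨t, (mem_pIp_eZero_iff P lam t).2 ((mem_pJp_eZero_iff P lam t).1 ht)⟩
    exact (hβ S).symm.trans (h S)
  · exact Finset.sum_eq_zero fun T _ => by rw [weylForm_eq_zero_of_notMem hfW htc T ht, mul_zero]

end SchurAlgebra

theorem Lp0_embeds_in_L_general
    {R : Type} [Field R] {n r g : ℕ} {m : Fin r → ℕ}
    {Λ : Finset (MultiComp n r m)}
    (SA : SchurAlgebra R Λ) (P : BlockCtx r g)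
    (Sp : Subalgebra R SA.carrier)
    (lam : LamP Λ)
    -- `Z_p^{(λ,0)}`, the pairing `β_{(λ,0)}`, its radical, and `L_p^{(λ,0)}`
    (Z0 : BasedRightModule R ↥Sp {x : TabOf Λ lam // x ∈ pJp P (eZero P lam)})
    (hZ0 : SA.IsZpModule P Sp (eZero P lam) Z0)
    (f0 : {x : TabOf Λ lam // x ∈ pIp P (eZero P lam)} →
      {x : TabOf Λ lam // x ∈ pJp P (eZero P lam)} → R)
    (hf0 : SA.IsBetaForm P (eZero P lam) f0)
    (N0 : Submodule (↥Sp)ᵐᵒᵖ Z0.M)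
    (hN0 : SA.IsBetaRadical P Sp (eZero P lam) Z0 f0 N0)
    -- the Weyl module `W^λ`, its canonical form, `rad W^λ`, and `L^λ`
    (W : BasedRightModule R SA.carrier (TabOf Λ lam))
    (hW : SA.IsWeylModule lam W)
    (tc : TabOf Λ lam) (htc : IsCanonical lam tc)
    (fW : TabOf Λ lam → TabOf Λ lam → R)
    (hfW : SA.IsWeylForm lam tc fW)
    (NW : Submodule SA.carrierᵐᵒᵖ W.M)
    (hNW : IsFormRadical W fW NW) :
    ∃ F : (Z0.M ⧸ N0) →ₗ[R] (W.M ⧸ NW), Function.Injective F ∧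
      ∀ (a : ↥Sp) (x : Z0.M ⧸ N0),
        F (MulOpposite.op a • x) = MulOpposite.op (a : SA.carrier) • F x :=
  exists_injective_quotient_map (fun a : ↥Sp => (a : SA.carrier)) N0 NW
    (SchurAlgebra.zpToWeyl Z0 W)
    (SchurAlgebra.zpToWeyl_smul hW hZ0 htc.1)
    (SchurAlgebra.zpToWeyl_mem_iff hf0 hN0 hfW hNW htc.1)

theorem Lp0_embeds_in_L
    {R : Type} [Field R] {n r g : ℕ} {m : Fin r → ℕ}
    (hn : 0 < n) (hr : 0 < r) (hm : ∀ k, 0 < m k)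
    {Λ : Finset (MultiComp n r m)} (hΛ : Saturated Λ)
    (SA : SchurAlgebra R Λ) (P : BlockCtx r g)
    (Sp : Subalgebra R SA.carrier)
    (hSp : (Sp : Set SA.carrier) =
      (Submodule.span R (SA.ZpSet P) : Submodule R SA.carrier))
    (lam : LamP Λ)
    -- `Z_p^{(λ,0)}`, the pairing `β_{(λ,0)}`, its radical, and `L_p^{(λ,0)}`
    (Z0 : BasedRightModule R ↥Sp {x : TabOf Λ lam // x ∈ pJp P (eZero P lam)})
    (hZ0 : SA.IsZpModule P Sp (eZero P lam) Z0)
    (f0 : {x : TabOf Λ lam // x ∈ pIp P (eZero P lam)} →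
      {x : TabOf Λ lam // x ∈ pJp P (eZero P lam)} → R)
    (hf0 : SA.IsBetaForm P (eZero P lam) f0)
    (N0 : Submodule (↥Sp)ᵐᵒᵖ Z0.M)
    (hN0 : SA.IsBetaRadical P Sp (eZero P lam) Z0 f0 N0)
    -- the Weyl module `W^λ`, its canonical form, `rad W^λ`, and `L^λ`
    (W : BasedRightModule R SA.carrier (TabOf Λ lam))
    (hW : SA.IsWeylModule lam W)
    (tc : TabOf Λ lam) (htc : IsCanonical lam tc)
    (fW : TabOf Λ lam → TabOf Λ lam → R)
    (hfW : SA.IsWeylForm lam tc fW)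
    (NW : Submodule SA.carrierᵐᵒᵖ W.M)
    (hNW : IsFormRadical W fW NW) :
    ∃ F : (Z0.M ⧸ N0) →ₗ[R] (W.M ⧸ NW), Function.Injective F ∧
      ∀ (a : ↥Sp) (x : Z0.M ⧸ N0),
        F (MulOpposite.op a • x) = MulOpposite.op (a : SA.carrier) • F x :=
  Lp0_embeds_in_L_general SA P Sp lam Z0 hZ0 f0 hf0 N0 hN0 W hW tc htc fW hfW NW hNW
end
end

section
/- Let Λ = P~_{n,r}(m), Λ^+ = P_{n,r}(m), and let α = (n_1, …, n_g) with all n_k > 0 and n_1 + ⋯ + n_g = n. Then: (i) the map μ ↦ (μ^{[1]}, …, μ^{[g]}) is a bijection from {μ ∈ Λ : α_p(μ) = α} onto Λ_{n_1} × ⋯ × Λ_{n_g}; (ii) the map λ ↦ (λ^{[1]}, …, λ^{[g]}) is a bijection from {λ ∈ Λ^+ : α_p(λ) = α} onto Λ^+_{n_1} × ⋯ × Λ^+_{n_g}; (iii) for λ ∈ Λ^+ and μ ∈ Λ with α_p(λ) = α_p(μ), the map T ↦ (T^{[1]}, …, T^{[g]}) is a bijection from T_0^p(λ,μ) onto T_0(λ^{[1]},μ^{[1]})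 × ⋯ × T_0(λ^{[g]},μ^{[g]}). -/
/-!
Common framework for the formalization of results of Shoji–Wada,
"Cyclotomic q-Schur algebras associated to the Ariki-Koike algebra".
-/

open scoped BigOperators TensorProduct
open MulOpposite

noncomputable section

/-!
Cutting a multicomposition into its `p`-blocks only regroups its components, so it is undone
by gluing block multicompositions back together; this gives (i) and (ii).

For (iii), an entry `(i, k')` in component `k` of a semistandard tableau has `k' ≥ k`, so it
never lies in an earlier block than its cell. When `a_p(λ) = a_p(μ)`, the cells of `λ` lying
in the blocks `≤ b` and the cells whose entry lies in a block `≤ b` are equally many (both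
number `n₁ + ⋯ + n_b`), and the second set is contained in the first. Hence every entry lies in
the block of its cell, and a semistandard tableau is the same thing as a family of
semistandard tableaux of the blocks.
-/

/-- `f'` is `f` restricted to `p → q`, read through `eα` and `eβ`. -/
def Equiv.fiberEquivOfRestrict {α α' β β' : Type*} {p : α → Prop} {q : β → Prop}
    (eα : α' ≃ Subtype p) (eβ : β' ≃ Subtype q) {f : α → β} {f' : α' → β'}
    (hf : ∀ a, (eβ (f' a) : β) = f (eα a)) (hq : ∀ a, q (f a) → p a) (y : β') :
    {a // f' a = y} ≃ {a // f a = eβ y} where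
  toFun a := ⟨eα a.1, by rw [← hf, a.2]⟩
  invFun a := ⟨eα.symm ⟨a.1, hq a.1 (by rw [a.2]; exact (eβ y).2)⟩,
    eβ.injective (Subtype.ext (by rw [hf, Equiv.apply_symm_apply, a.2]))⟩
  left_inv a := by simp
  right_inv a := by simp

theorem MCEntry.ext_val {r : ℕ} {m : Fin r → ℕ} {e e' : MCEntry r m} (h₁ : e.1 = e'.1)
    (h₂ : (e.2 : ℕ) = e'.2) : e = e' :=
  Sigma.ext h₁ ((Fin.heq_ext_iff (congrArg m h₁)).2 h₂)

theorem Finset.univ_filter_fst_mem_eq_sigma {ι : Type*} {κ : ι → Type*} [Fintype ι]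
    [∀ i, Fintype (κ i)] [DecidableEq ι]
    (s : Finset ι) : Finset.univ.filter (fun e : Σ i, κ i => e.1 ∈ s) =
      s.sigma fun _ => Finset.univ := by
  ext
  simp

namespace MultiComp

variable {n r : ℕ} {m : Fin r → ℕ}

theorem part_congr (x : MultiComp n r m) {k k' : Fin r} (h : k = k')
    {i : Fin (m k)} {i' : Fin (m k')} (hi : (i : ℕ) = i') : x.part k i = x.part k' i' := by
  subst h
  rw [Fin.ext hi]

theorem Cell.ext_val {x : MultiComp n r m} {c c' : x.Cell} (h₁ : c.1 = c'.1)
    (h₂ : (c.2.1 : ℕ) = c'.2.1) (h₃ : (c.2.2 : ℕ) = c'.2.2) : c = c' := by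
  obtain ⟨k, i, j⟩ := c
  obtain ⟨k', i', j'⟩ := c'
  obtain rfl : k = k' := h₁
  obtain rfl : i = i' := Fin.ext h₂
  obtain rfl : j = j' := Fin.ext h₃
  rfl

theorem sum_part_filter_fst_mem (x : MultiComp n r m) (s : Finset (Fin r)) :
    ∑ e ∈ Finset.univ.filter (fun e : MCEntry r m => e.1 ∈ s), x.part e.1 e.2 =
      ∑ k ∈ s, x.compSize k := by
  rw [Finset.univ_filter_fst_mem_eq_sigma, Finset.sum_sigma]
  rfl

theorem card_filter_cell_fst_mem (x : MultiComp n r m) (s : Finset (Fin r)) :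
    (Finset.univ.filter fun c : x.Cell => c.1 ∈ s).card = ∑ k ∈ s, x.compSize k := by
  rw [Finset.univ_filter_fst_mem_eq_sigma, Finset.card_sigma]
  simp [compSize]

end MultiComp

theorem SSTab.card_filter_entry_fst_mem {n r : ℕ} {m : Fin r → ℕ} {lam mu : MultiComp n r m}
    (T : SSTab lam mu) (s : Finset (Fin r)) :
    (Finset.univ.filter fun c => (T.entry c).1 ∈ s).card = ∑ k ∈ s, mu.compSize k := by
  rw [← mu.sum_part_filter_fst_mem s, Finset.card_eq_sum_card_fiberwise
    (t := Finset.univ.filter fun e : MCEntry r m => e.1 ∈ s) (fun c hc => by simpa using hc)]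
  refine Finset.sum_congr rfl fun e he => ?_
  rw [T.typeCount e, Fintype.card_subtype, Finset.filter_filter]
  congr 1
  ext c
  simp only [Finset.mem_filter, Finset.mem_univ, true_and, and_iff_right_iff_imp]
  rintro rfl
  simpa using he

namespace BlockCtx

variable {r g : ℕ} (P : BlockCtx r g) {n : ℕ} {m : Fin r → ℕ}

theorem π_blkEquiv (b : Fin g) (kb : Fin (P.rblk b)) : P.π (P.blkEquiv b kb) = b :=
  (Finset.mem_filter.1 (P.blkEquiv b kb).2).2

def blkIdx {b : Fin g} (k : Fin r) (h : P.π k = b) : Fin (P.rblk b) :=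
  (P.blkEquiv b).symm ⟨k, Finset.mem_filter.2 ⟨Finset.mem_univ _, h⟩⟩

theorem blkEquiv_blkIdx {b : Fin g} (k : Fin r) (h : P.π k = b) :
    (P.blkEquiv b (P.blkIdx k h) : Fin r) = k :=
  congrArg Subtype.val ((P.blkEquiv b).apply_symm_apply _)

theorem blkIdx_blkEquiv (b : Fin g) (kb : Fin (P.rblk b)) (h : P.π (P.blkEquiv b kb) = b) :
    P.blkIdx (P.blkEquiv b kb) h = kb :=
  (P.blkEquiv b).symm_apply_apply kb

theorem blkEquiv_le_blkEquiv_iff {b : Fin g} {kb kb' : Fin (P.rblk b)} :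
    (P.blkEquiv b kb : Fin r) ≤ P.blkEquiv b kb' ↔ kb ≤ kb' :=
  Subtype.coe_le_coe.trans (P.blkEquiv b).le_iff_le

theorem blkEquiv_lt_blkEquiv_iff {b : Fin g} {kb kb' : Fin (P.rblk b)} :
    (P.blkEquiv b kb : Fin r) < P.blkEquiv b kb' ↔ kb < kb' :=
  Subtype.coe_lt_coe.trans (P.blkEquiv b).lt_iff_lt

theorem blkEquiv_inj {b : Fin g} {kb kb' : Fin (P.rblk b)} :
    (P.blkEquiv b kb : Fin r) = P.blkEquiv b kb' ↔ kb = kb' :=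
  Subtype.coe_inj.trans (P.blkEquiv b).injective.eq_iff

theorem sum_blkEquiv (f : Fin r → ℕ) (b : Fin g) :
    ∑ kb, f (P.blkEquiv b kb) = ∑ k ∈ Finset.univ.filter (fun k => P.π k = b), f k :=
  ((P.blkEquiv b).toEquiv.sum_comp (fun k => f k)).trans (Finset.sum_coe_sort _ f)

def entryEquiv (b : Fin g) :
    MCEntry (P.rblk b) (P.mblk m b) ≃ {e : MCEntry r m // P.π e.1 = b} where
  toFun e := ⟨⟨P.blkEquiv b e.1, e.2⟩, P.π_blkEquiv b e.1⟩
  invFun e := ⟨P.blkIdx e.1.1 e.2, Fin.cast (congrArg m (P.blkEquiv_blkIdx _ _)).symm e.1.2⟩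
  left_inv e := MCEntry.ext_val (P.blkIdx_blkEquiv b e.1 (P.π_blkEquiv b e.1)) rfl
  right_inv e := Subtype.ext (MCEntry.ext_val (P.blkEquiv_blkIdx e.1.1 e.2) rfl)

theorem entryLE_entryEquiv_iff (b : Fin g) (e e' : MCEntry (P.rblk b) (P.mblk m b)) :
    entryLE (P.entryEquiv b e : MCEntry r m) (P.entryEquiv b e') ↔ entryLE e e' := by
  simp only [entryLE, entryEquiv, Equiv.coe_fn_mk, P.blkEquiv_lt_blkEquiv_iff, P.blkEquiv_inj]

theorem entryLT_entryEquiv_iff (b : Fin g) (e e' : MCEntry (P.rblk b) (P.mblk m b)) :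
    entryLT (P.entryEquiv b e : MCEntry r m) (P.entryEquiv b e') ↔ entryLT e e' := by
  simp only [entryLT, entryEquiv, Equiv.coe_fn_mk, P.blkEquiv_lt_blkEquiv_iff, P.blkEquiv_inj]

theorem entryLE_entryEquiv_symm_iff (b : Fin g) (e e' : {e : MCEntry r m // P.π e.1 = b}) :
    entryLE ((P.entryEquiv b).symm e) ((P.entryEquiv b).symm e') ↔ entryLE e.1 e'.1 := by
  rw [← P.entryLE_entryEquiv_iff, Equiv.apply_symm_apply, Equiv.apply_symm_apply]

theorem entryLT_entryEquiv_symm_iff (b : Fin g) (e e' : {e : MCEntry r m // P.π e.1 = b}) :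
    entryLT ((P.entryEquiv b).symm e) ((P.entryEquiv b).symm e') ↔ entryLT e.1 e'.1 := by
  rw [← P.entryLT_entryEquiv_iff, Equiv.apply_symm_apply, Equiv.apply_symm_apply]

def cellEquiv (x : MultiComp n r m) (b : Fin g) :
    (P.restrictTo x b (P.alphaP x b) rfl).Cell ≃ {c : x.Cell // P.π c.1 = b} where
  toFun c := ⟨⟨P.blkEquiv b c.1, c.2.1, c.2.2⟩, P.π_blkEquiv b c.1⟩
  invFun c := ⟨P.blkIdx c.1.1 c.2,
    Fin.cast (congrArg m (P.blkEquiv_blkIdx c.1.1 c.2)).symm c.1.2.1,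
    Fin.cast (x.part_congr (P.blkEquiv_blkIdx c.1.1 c.2).symm rfl) c.1.2.2⟩
  left_inv c := MultiComp.Cell.ext_val (P.blkIdx_blkEquiv b c.1 (P.π_blkEquiv b c.1)) rfl rfl
  right_inv c := Subtype.ext (MultiComp.Cell.ext_val (P.blkEquiv_blkIdx c.1.1 c.2) rfl rfl)

theorem sum_compSize_π_le_eq_aP_add_alphaP (x : MultiComp n r m) (b : Fin g) :
    ∑ k ∈ Finset.univ.filter (fun k => P.π k ≤ b), x.compSize k =
      P.aP x b + P.alphaP x b := by
  simp only [aP, alphaP, Finset.sum_filter, ← Finset.sum_add_distrib]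
  refine Finset.sum_congr rfl fun k _ => ?_
  rcases lt_trichotomy (P.π k) b with h | h | h
  · simp [h, h.le, h.ne]
  · simp [h]
  · simp [h.not_ge, h.not_gt, h.ne']

theorem sum_compSize_π_le_eq_of_aP_eq {lam mu : MultiComp n r m} (h : P.aP lam = P.aP mu)
    (b : Fin g) :
    ∑ k ∈ Finset.univ.filter (fun k => P.π k ≤ b), lam.compSize k =
      ∑ k ∈ Finset.univ.filter (fun k => P.π k ≤ b), mu.compSize k := by
  by_cases hb : IsMax b
  · rw [Finset.filter_true_of_mem fun k _ => hb.isTop (P.π k)]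
    exact lam.sum_eq.trans mu.sum_eq.symm
  · rw [Finset.filter_congr fun k _ => (Order.lt_succ_iff_of_not_isMax hb).symm]
    exact congrFun h (Order.succ b)

theorem alphaP_eq_of_aP_eq {lam mu : MultiComp n r m} (h : P.aP lam = P.aP mu) :
    P.alphaP mu = P.alphaP lam := by
  funext b
  have := P.sum_compSize_π_le_eq_of_aP_eq h b
  rw [P.sum_compSize_π_le_eq_aP_add_alphaP, P.sum_compSize_π_le_eq_aP_add_alphaP,
    congrFun h b] at this
  omega

theorem π_entry_eq_of_aP_eq {lam mu : MultiComp n r m} (h : P.aP lam = P.aP mu)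
    (T : SSTab lam mu) (c : lam.Cell) : P.π (T.entry c).1 = P.π c.1 := by
  refine le_antisymm ?_ (P.mono (T.compLE c))
  set s := Finset.univ.filter fun k => P.π k ≤ P.π c.1
  have hsub : Finset.univ.filter (fun c' => (T.entry c').1 ∈ s) ⊆
      Finset.univ.filter (fun c' : lam.Cell => c'.1 ∈ s) := by
    intro c'
    simpa [s] using (P.mono (T.compLE c')).trans
  have hcard : (Finset.univ.filter fun c' : lam.Cell => c'.1 ∈ s).card ≤
      (Finset.univ.filter fun c' => (T.entry c').1 ∈ s).card := by
    rw [lam.card_filter_cell_fst_mem, T.card_filter_entry_fst_mem,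
      P.sum_compSize_π_le_eq_of_aP_eq h]
  have hc : c ∈ Finset.univ.filter (fun c' : lam.Cell => c'.1 ∈ s) := by simp [s]
  rw [← Finset.eq_of_subset_of_card_le hsub hcard] at hc
  simpa [s] using hc

section Glue

variable (nb : Fin g → ℕ) (f : ∀ b, MultiComp (nb b) (P.rblk b) (P.mblk m b))

def gluePart (k : Fin r) (i : Fin (m k)) : ℕ :=
  (f (P.π k)).part (P.blkIdx k rfl) (Fin.cast (congrArg m (P.blkEquiv_blkIdx k rfl)).symm i)

theorem gluePart_blkEquiv (b : Fin g) (kb : Fin (P.rblk b)) (i : Fin (P.mblk m b kb)) :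
    P.gluePart nb f (P.blkEquiv b kb) i = (f b).part kb i := by
  have hpart : ∀ k (h : P.π k = b) (i : Fin (m k)), P.gluePart nb f k i =
      (f b).part (P.blkIdx k h) (Fin.cast (congrArg m (P.blkEquiv_blkIdx k h)).symm i) := by
    rintro k rfl i
    rfl
  exact (hpart _ (P.π_blkEquiv b kb) i).trans ((f b).part_congr (P.blkIdx_blkEquiv b kb _) rfl)

theorem sum_gluePart_π_eq (b : Fin g) :
    ∑ k ∈ Finset.univ.filter (fun k => P.π k = b), ∑ i, P.gluePart nb f k i = nb b := by
  rw [← P.sum_blkEquiv]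
  exact (Finset.sum_congr rfl fun kb _ =>
    Finset.sum_congr rfl fun i _ => P.gluePart_blkEquiv nb f b kb i).trans (f b).sum_eq

def glueComp (hsum : ∑ b, nb b = n) : MultiComp n r m where
  part := P.gluePart nb f
  sum_eq := by
    rw [← Finset.sum_fiberwise Finset.univ P.π]
    simp only [P.sum_gluePart_π_eq nb f, hsum]

variable {nb f}

theorem alphaP_glueComp (hsum : ∑ b, nb b = n) : P.alphaP (P.glueComp nb f hsum) = nb :=
  funext (P.sum_gluePart_π_eq nb f)

theorem restrictTo_glueComp (hsum : ∑ b, nb b = n) (b : Fin g)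
    (h : P.alphaP (P.glueComp nb f hsum) b = nb b) :
    P.restrictTo (P.glueComp nb f hsum) b (nb b) h = f b :=
  MultiComp.part_injective (funext₂ (P.gluePart_blkEquiv nb f b))

theorem isPartition_glueComp (hsum : ∑ b, nb b = n) (hf : ∀ b, (f b).IsPartition) :
    (P.glueComp nb f hsum).IsPartition :=
  fun k _ _ hij => hf (P.π k) (P.blkIdx k rfl) _ _ hij

theorem glueComp_restrictTo (hsum : ∑ b, nb b = n) (mu : MultiComp n r m)
    (h : P.alphaP mu = nb) :
    P.glueComp nb (fun b => P.restrictTo mu b (nb b) (congrFun h b)) hsum = mu :=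
  MultiComp.part_injective (funext₂ fun k _ => mu.part_congr (P.blkEquiv_blkIdx k rfl) rfl)

end Glue

def blockCompEquiv (alpha : Fin g → ℕ) (hsum : ∑ b, alpha b = n) :
    {mu : MultiComp n r m // P.alphaP mu = alpha} ≃
      ∀ b, MultiComp (alpha b) (P.rblk b) (P.mblk m b) where
  toFun mu b := P.restrictTo mu.1 b (alpha b) (congrFun mu.2 b)
  invFun f := ⟨P.glueComp alpha f hsum, P.alphaP_glueComp hsum⟩
  left_inv mu := Subtype.ext (P.glueComp_restrictTo hsum mu.1 mu.2)
  right_inv _ := funext fun b =>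
    P.restrictTo_glueComp hsum b (congrFun (P.alphaP_glueComp hsum) b)

def blockPartitionEquiv (alpha : Fin g → ℕ) (hsum : ∑ b, alpha b = n) :
    {lam : MultiComp n r m // P.alphaP lam = alpha ∧ lam.IsPartition} ≃
      ∀ b, {x : MultiComp (alpha b) (P.rblk b) (P.mblk m b) // x.IsPartition} where
  toFun lam b := ⟨P.restrictTo lam.1 b (alpha b) (congrFun lam.2.1 b),
    P.restrictTo_isPartition lam.1 lam.2.2 b (alpha b) (congrFun lam.2.1 b)⟩
  invFun f := ⟨P.glueComp alpha (fun b => f b) hsum, P.alphaP_glueComp hsum,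
    P.isPartition_glueComp hsum fun b => (f b).2⟩
  left_inv lam := Subtype.ext (P.glueComp_restrictTo hsum lam.1 lam.2.1)
  right_inv _ := funext fun b =>
    Subtype.ext (P.restrictTo_glueComp hsum b (congrFun (P.alphaP_glueComp hsum) b))

section Tableaux

variable {lam mu : MultiComp n r m} (hα : P.alphaP mu = P.alphaP lam)

def restrictTab (T : SSTab lam mu) (hT : ∀ c, P.π (T.entry c).1 = P.π c.1) (b : Fin g) :
    SSTab (P.restrictTo lam b (P.alphaP lam b) rfl)
      (P.restrictTo mu b (P.alphaP lam b) (congrFun hα b)) where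
  entry c := (P.entryEquiv b).symm
    ⟨T.entry (P.cellEquiv lam b c), (hT _).trans (P.cellEquiv lam b c).2⟩
  rowWeak _ i j j' hj := (P.entryLE_entryEquiv_symm_iff b _ _).2 (T.rowWeak _ i j j' hj)
  colStrict _ i i' j hj hj' hii :=
    (P.entryLT_entryEquiv_symm_iff b _ _).2 (T.colStrict _ i i' j hj hj' hii)
  compLE c := P.blkEquiv_le_blkEquiv_iff.1
    ((T.compLE (P.cellEquiv lam b c).1).trans_eq
      (P.blkEquiv_blkIdx _ ((hT _).trans (P.cellEquiv lam b c).2)).symm)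
  typeCount eb := (T.typeCount (P.entryEquiv b eb).1).trans <| Fintype.card_congr <|
    (Equiv.fiberEquivOfRestrict (P.cellEquiv lam b) (P.entryEquiv b)
      (fun _ => congrArg Subtype.val ((P.entryEquiv b).apply_symm_apply _))
      (fun c h => (hT c).symm.trans h) eb).symm

variable (G : ∀ b, SSTab (P.restrictTo lam b (P.alphaP lam b) rfl)
    (P.restrictTo mu b (P.alphaP lam b) (congrFun hα b)))

def glueEntry (c : lam.Cell) : MCEntry r m :=
  P.entryEquiv (P.π c.1) ((G (P.π c.1)).entry ((P.cellEquiv lam (P.π c.1)).symm ⟨c, rfl⟩))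

theorem glueEntry_eq {b : Fin g} (c : lam.Cell) (h : P.π c.1 = b) :
    P.glueEntry hα G c = P.entryEquiv b ((G b).entry ((P.cellEquiv lam b).symm ⟨c, h⟩)) := by
  subst h
  rfl

theorem π_glueEntry (c : lam.Cell) : P.π (P.glueEntry hα G c).1 = P.π c.1 :=
  (P.entryEquiv _ _).2

theorem glueEntry_cellEquiv (b : Fin g) (c : (P.restrictTo lam b (P.alphaP lam b) rfl).Cell) :
    P.glueEntry hα G (P.cellEquiv lam b c) = P.entryEquiv b ((G b).entry c) := by
  rw [P.glueEntry_eq hα G _ (P.cellEquiv lam b c).2, Subtype.coe_eta, Equiv.symm_apply_apply]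

theorem card_fiber_glueEntry (b : Fin g) (eb : MCEntry (P.rblk b) (P.mblk m b)) :
    mu.part (P.entryEquiv b eb).1.1 (P.entryEquiv b eb).1.2 =
      Fintype.card {c // P.glueEntry hα G c = P.entryEquiv b eb} :=
  ((G b).typeCount eb).trans <| Fintype.card_congr <|
    Equiv.fiberEquivOfRestrict (P.cellEquiv lam b) (P.entryEquiv b)
      (fun c => (P.glueEntry_cellEquiv hα G b c).symm)
      (fun c h => (P.π_glueEntry hα G c).symm.trans h) eb

def glueTab : SSTab lam mu where
  entry := P.glueEntry hα G
  rowWeak k _ _ _ hj :=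
    (P.entryLE_entryEquiv_iff _ _ _).2 ((G (P.π k)).rowWeak (P.blkIdx k rfl) _ _ _ hj)
  colStrict k _ _ j _ _ hii :=
    (P.entryLT_entryEquiv_iff _ _ _).2 ((G (P.π k)).colStrict (P.blkIdx k rfl) _ _ j _ _ hii)
  compLE c :=
    (P.blkEquiv_blkIdx c.1 rfl).symm.trans_le (P.blkEquiv_le_blkEquiv_iff.2
      ((G (P.π c.1)).compLE ((P.cellEquiv lam _).symm ⟨c, rfl⟩)))
  typeCount e := by
    obtain ⟨eb, heb⟩ := (P.entryEquiv (P.π e.1)).surjective ⟨e, rfl⟩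
    have := P.card_fiber_glueEntry hα G _ eb
    rwa [heb] at this

end Tableaux

def sstabEquiv {lam mu : MultiComp n r m} (h : P.aP lam = P.aP mu) :
    SSTab lam mu ≃ ∀ b, SSTab (P.restrictTo lam b (P.alphaP lam b) rfl)
      (P.restrictTo mu b (P.alphaP lam b) (congrFun (P.alphaP_eq_of_aP_eq h) b)) where
  toFun T := P.restrictTab (P.alphaP_eq_of_aP_eq h) T (P.π_entry_eq_of_aP_eq h T)
  invFun G := P.glueTab (P.alphaP_eq_of_aP_eq h) G
  left_inv T := SSTab.entry_injective (funext fun c => by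
    simp [glueTab, glueEntry, restrictTab])
  right_inv G := funext fun b => SSTab.entry_injective (funext fun c =>
    (P.entryEquiv b).symm_apply_eq.2
      (Subtype.ext (P.glueEntry_cellEquiv (P.alphaP_eq_of_aP_eq h) G b c)))

theorem entryEquiv_sstabEquiv_entry {lam mu : MultiComp n r m} (h : P.aP lam = P.aP mu)
    (T : SSTab lam mu) (b : Fin g) (c : (P.restrictTo lam b (P.alphaP lam b) rfl).Cell) :
    (P.entryEquiv b ((P.sstabEquiv h T b).entry c) : MCEntry r m) =
      T.entry (P.cellEquiv lam b c) :=
  congrArg Subtype.val ((P.entryEquiv b).apply_symm_apply _)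

end BlockCtx

theorem block_decomposition_bijections_general
    {n r g : ℕ} {m : Fin r → ℕ}
    (P : BlockCtx r g)
    (alpha : Fin g → ℕ) (hsum : ∑ b, alpha b = n) :
    -- (i)
    Function.Bijective
      (fun (mu : {mu : MultiComp n r m // P.alphaP mu = alpha}) (b : Fin g) =>
        P.restrictTo mu.1 b (alpha b) (congrFun mu.2 b)) ∧
    -- (ii)
    Function.Bijective
      (fun (lam : {lam : MultiComp n r m //
          P.alphaP lam = alpha ∧ lam.IsPartition}) (b : Fin g) =>
        (⟨P.restrictTo lam.1 b (alpha b) (congrFun lam.2.1 b),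
          P.restrictTo_isPartition lam.1 lam.2.2 b (alpha b)
            (congrFun lam.2.1 b)⟩ :
          {x : MultiComp (alpha b) (P.rblk b) (P.mblk m b) // x.IsPartition})) ∧
    -- (iii): for `λ ∈ Λ⁺` and `μ ∈ Λ` with `a_p(λ) = a_p(μ)` (equivalently
    -- `α_p(λ) = α_p(μ)`), restriction of entries to the blocks is a bijection
    -- from `T₀^p(λ,μ) = T₀(λ,μ)` onto the product of the `T₀(λ^{[b]},μ^{[b]})`
    (∀ (lam mu : MultiComp n r m), lam.IsPartition →
      P.aP lam = P.aP mu →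
      ∃ halpha : P.alphaP mu = P.alphaP lam,
      ∃ F : SSTab lam mu ≃ ((b : Fin g) →
          SSTab (P.restrictTo lam b (P.alphaP lam b) rfl)
            (P.restrictTo mu b (P.alphaP lam b) (congrFun halpha b))),
        ∀ (T : SSTab lam mu) (b : Fin g)
          (c : (P.restrictTo lam b (P.alphaP lam b) rfl).Cell),
          (((P.blkEquiv b ((F T b).entry c).1 :
              {x // x ∈ Finset.univ.filter fun k => P.π k = b}) : Fin r) =
            (T.entry ⟨((P.blkEquiv b c.1 :
              {x // x ∈ Finset.univ.filter fun k => P.π k = b}) : Fin r),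
              c.2.1, c.2.2⟩).1) ∧
          ((((F T b).entry c).2 : ℕ) =
            ((T.entry ⟨((P.blkEquiv b c.1 :
              {x // x ∈ Finset.univ.filter fun k => P.π k = b}) : Fin r),
              c.2.1, c.2.2⟩).2 : ℕ))) := by
  refine ⟨(P.blockCompEquiv alpha hsum).bijective, (P.blockPartitionEquiv alpha hsum).bijective,
    fun lam mu _ h => ⟨P.alphaP_eq_of_aP_eq h, P.sstabEquiv h, fun T b c => ?_⟩⟩
  have hentry := P.entryEquiv_sstabEquiv_entry h T b c
  exact ⟨congrArg Sigma.fst hentry, (congrArg (fun e : MCEntry r m => (e.2 : ℕ)) hentry :)⟩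

theorem block_decomposition_bijections
    {n r g : ℕ} {m : Fin r → ℕ} (hn : 0 < n) (hr : 0 < r) (hm : ∀ k, 0 < m k)
    (P : BlockCtx r g)
    (alpha : Fin g → ℕ) (hpos : ∀ b, 0 < alpha b) (hsum : ∑ b, alpha b = n) :
    -- (i)
    Function.Bijective
      (fun (mu : {mu : MultiComp n r m // P.alphaP mu = alpha}) (b : Fin g) =>
        P.restrictTo mu.1 b (alpha b) (congrFun mu.2 b)) ∧
    -- (ii)
    Function.Bijective
      (fun (lam : {lam : MultiComp n r m //
          P.alphaP lam = alpha ∧ lam.IsPartition}) (b : Fin g) =>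
        (⟨P.restrictTo lam.1 b (alpha b) (congrFun lam.2.1 b),
          P.restrictTo_isPartition lam.1 lam.2.2 b (alpha b)
            (congrFun lam.2.1 b)⟩ :
          {x : MultiComp (alpha b) (P.rblk b) (P.mblk m b) // x.IsPartition})) ∧
    -- (iii): for `λ ∈ Λ⁺` and `μ ∈ Λ` with `a_p(λ) = a_p(μ)` (equivalently
    -- `α_p(λ) = α_p(μ)`), restriction of entries to the blocks is a bijection
    -- from `T₀^p(λ,μ) = T₀(λ,μ)` onto the product of the `T₀(λ^{[b]},μ^{[b]})`
    (∀ (lam mu : MultiComp n r m), lam.IsPartition →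
      P.aP lam = P.aP mu →
      ∃ halpha : P.alphaP mu = P.alphaP lam,
      ∃ F : SSTab lam mu ≃ ((b : Fin g) →
          SSTab (P.restrictTo lam b (P.alphaP lam b) rfl)
            (P.restrictTo mu b (P.alphaP lam b) (congrFun halpha b))),
        ∀ (T : SSTab lam mu) (b : Fin g)
          (c : (P.restrictTo lam b (P.alphaP lam b) rfl).Cell),
          (((P.blkEquiv b ((F T b).entry c).1 :
              {x // x ∈ Finset.univ.filter fun k => P.π k = b}) : Fin r) =
            (T.entry ⟨((P.blkEquiv b c.1 :
              {x // x ∈ Finset.univ.filter fun k => P.π k = b}) : Fin r),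
              c.2.1, c.2.2⟩).1) ∧
          ((((F T b).entry c).2 : ℕ) =
            ((T.entry ⟨((P.blkEquiv b c.1 :
              {x // x ∈ Finset.univ.filter fun k => P.π k = b}) : Fin r),
              c.2.1, c.2.2⟩).2 : ℕ))) :=
  block_decomposition_bijections_general P alpha hsum
end
end
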